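/- arXiv:2510.01065 — 2 statements merged into one kernel-verified Lean document; each statement's English description precedes it below -/
import Mathlib

section
/- Let G be a torsion-free abelian group, A, B, C finite nonempty multisets over G, and g ∈ G. If A + C + {g} = B + C (pairwise-sum multisets, where {g} is the singleton multiset), then the translate A + {g} equals B. -/
/-!
Send a multiset `A` over `G` to `∑ a ∈ A, Xᵃ` in the monoid semiring `ℕ[G]`. This is injective and
turns pairwise sums into products, so for the images `α, β, γ` of `A, B, C` the hypothesis becomes
`(α · Xᵍ) · γ = β · γ` with `γ ≠ 0`. A torsion-free abelian group is flat over `ℤ`, so it embeds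
in the `ℚ`-vector space `ℚ ⊗ G`; hence it has unique sums, and then `ℕ[G]` has cancellative
multiplication.
-/

/-- Pairwise sum of multisets over an additive group. -/
def pSum {G : Type*} [AddCommGroup G] (A B : Multiset G) : Multiset G :=
  (A.product B).map fun p => p.1 + p.2

open AddMonoidAlgebra

instance IsAddTorsionFree.twoUniqueSums {G : Type*} [AddCommGroup G] [IsAddTorsionFree G] :
    TwoUniqueSums G :=
  .of_injective_addHom (TensorProduct.mk ℤ ℚ G 1).toAddMonoidHom.toAddHom
    (Module.Flat.tensorProduct_mk_injective ℤ G ℚ) inferInstance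

namespace Multiset

variable {G : Type*} [DecidableEq G]

noncomputable def toAddMonoidAlgebra : Multiset G →+ AddMonoidAlgebra ℕ G :=
  coeffAddEquiv.symm.toAddMonoidHom.comp toFinsupp.toAddMonoidHom

theorem toAddMonoidAlgebra_injective : Function.Injective (toAddMonoidAlgebra (G := G)) :=
  ofCoeff_injective.comp toFinsupp.injective

theorem toAddMonoidAlgebra_eq_zero {A : Multiset G} : toAddMonoidAlgebra A = 0 ↔ A = 0 :=
  map_eq_zero_iff _ toAddMonoidAlgebra_injective

theorem toAddMonoidAlgebra_singleton (a : G) : toAddMonoidAlgebra {a} = single a 1 := by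
  simp [toAddMonoidAlgebra, ofCoeff_single]

theorem toAddMonoidAlgebra_map_add_left [Add G] (a : G) (B : Multiset G) :
    toAddMonoidAlgebra (B.map (a + ·)) = single a 1 * toAddMonoidAlgebra B := by
  induction B using Multiset.induction with
  | empty => simp
  | cons b B ih =>
    rw [map_cons, ← singleton_add, ← singleton_add, _root_.map_add, _root_.map_add, ih, mul_add,
      toAddMonoidAlgebra_singleton, toAddMonoidAlgebra_singleton, single_mul_single, mul_one]

theorem toAddMonoidAlgebra_pSum [AddCommGroup G] (A B : Multiset G) :
    toAddMonoidAlgebra (pSum A B) = toAddMonoidAlgebra A * toAddMonoidAlgebra B := by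
  induction A using Multiset.induction with
  | empty => simp [pSum, Multiset.product]
  | cons a A ih =>
    have hcons : pSum (a ::ₘ A) B = B.map (a + ·) + pSum A B := by
      simp [pSum, Multiset.product]
    rw [hcons, ← singleton_add, _root_.map_add, _root_.map_add, ih, toAddMonoidAlgebra_map_add_left,
      toAddMonoidAlgebra_singleton, add_mul]

end Multiset

open Multiset

theorem pSum_right_comm {G : Type*} [AddCommGroup G] (A B C : Multiset G) :
    pSum (pSum A B) C = pSum (pSum A C) B := by
  classical
  apply toAddMonoidAlgebra_injective
  simp only [toAddMonoidAlgebra_pSum, mul_right_comm]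

theorem pSum_right_cancel {G : Type*} [AddCommGroup G] [UniqueSums G] {A B C : Multiset G}
    (hC : C ≠ 0) (h : pSum A C = pSum B C) : A = B := by
  classical
  apply toAddMonoidAlgebra_injective
  refine mul_right_cancel₀ (toAddMonoidAlgebra_eq_zero.not.mpr hC) ?_
  rw [← toAddMonoidAlgebra_pSum, ← toAddMonoidAlgebra_pSum, h]

theorem multiset_cancellation_with_translation_general {G : Type*} [AddCommGroup G]
    (hG : ∀ g : G, g ≠ 0 → ¬IsOfFinAddOrder g)
    (A B C : Multiset G) (hC : C ≠ 0) (g : G)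
    (h : pSum (pSum A C) {g} = pSum B C) : pSum A {g} = B := by
  have : IsAddTorsionFree G := .of_not_isOfFinAddOrder fun a ha => hG a ha
  rw [pSum_right_comm] at h
  exact pSum_right_cancel hC h

theorem multiset_cancellation_with_translation {G : Type*} [AddCommGroup G]
    (hG : ∀ g : G, g ≠ 0 → ¬IsOfFinAddOrder g)
    (A B C : Multiset G) (hA : A ≠ 0) (hB : B ≠ 0) (hC : C ≠ 0) (g : G)
    (h : pSum (pSum A C) {g} = pSum B C) : pSum A {g} = B :=
  multiset_cancellation_with_translation_general hG A B C hC g h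
end

section
/- Let G be a torsion-free abelian group that is finitely generated (or more generally linearly orderable by translation-invariant order), n a positive integer, A, B finite nonempty multisets over G, and g ∈ G. If nA + {g} = nB (n-fold pairwise sums), then there exists h ∈ G with g = nh and A + {h} = B. -/
/-- `nSum n A` is the `n`-fold pairwise sum `A + A + ⋯ + A` (with `nSum 0 A = {0}`). -/
def nSum {G : Type*} [AddCommGroup G] : ℕ → Multiset G → Multiset G
  | 0, _ => {0}
  | n + 1, A => pSum A (nSum n A)

/-!
Order `G` translation-invariantly: it embeds in some `ℤ^d`, ordered lexicographically. Comparing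
the largest elements of both sides of `nA + {g} = nB` gives `g = n • (b - a)`, where `a` and `b`
are the largest elements of `A` and `B`; hence `n(A + {h}) = nB` for `h = b - a`.

To cancel `n`, send multisets to the rational group algebra of `G`, a domain in which `pSum` is
multiplication. From `p ^ n = q ^ n` we get `(p - q) * ∑ pⁱ q^(n-1-i) = 0`, and the second factor
is nonzero because it is the image of a nonempty multiset. So `p = q`, that is, `A + {h} = B`.
-/

section toAddMonoidAlgebra

variable {G : Type*}

variable (G) in
noncomputable def toAddMonoidAlgebra : Multiset G →+ AddMonoidAlgebra ℚ G := by
  classical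
  exact AddMonoidAlgebra.coeffAddEquiv.symm.toAddMonoidHom.comp <|
    (Finsupp.mapRange.addMonoidHom (Nat.castAddMonoidHom ℚ)).comp Multiset.toFinsupp.toAddMonoidHom

lemma toAddMonoidAlgebra_injective : Function.Injective (toAddMonoidAlgebra G) := by
  classical
  exact AddMonoidAlgebra.coeffAddEquiv.symm.injective.comp <|
    (Finsupp.mapRange_injective _ Nat.cast_zero Nat.cast_injective).comp Multiset.toFinsupp.injective

lemma toAddMonoidAlgebra_singleton (a : G) :
    toAddMonoidAlgebra G {a} = AddMonoidAlgebra.single a 1 := by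
  classical
  simp [toAddMonoidAlgebra, AddMonoidAlgebra.coeffAddEquiv]

lemma toAddMonoidAlgebra_cons (a : G) (A : Multiset G) :
    toAddMonoidAlgebra G (a ::ₘ A) = AddMonoidAlgebra.single a 1 + toAddMonoidAlgebra G A := by
  rw [← Multiset.singleton_add, map_add, toAddMonoidAlgebra_singleton]

end toAddMonoidAlgebra

section AddCommGroup

variable {G : Type*} [AddCommGroup G] {A B : Multiset G}

lemma mem_pSum {x : G} : x ∈ pSum A B ↔ ∃ a ∈ A, ∃ b ∈ B, a + b = x := by
  change x ∈ (A ×ˢ B).map _ ↔ _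
  simp [and_assoc]

lemma pSum_zero_left (B : Multiset G) : pSum 0 B = 0 := rfl

lemma pSum_cons_left (a : G) (A B : Multiset G) :
    pSum (a ::ₘ A) B = B.map (a + ·) + pSum A B := by
  change ((a ::ₘ A) ×ˢ B).map _ = _
  rw [Multiset.cons_product, Multiset.map_add, Multiset.map_map]
  rfl

lemma pSum_ne_zero (hA : A ≠ 0) (hB : B ≠ 0) : pSum A B ≠ 0 := by
  obtain ⟨a, ha⟩ := Multiset.exists_mem_of_ne_zero hA
  obtain ⟨b, hb⟩ := Multiset.exists_mem_of_ne_zero hB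
  exact fun h0 => Multiset.notMem_zero _ (h0 ▸ mem_pSum.2 ⟨a, ha, b, hb, rfl⟩)

lemma nSum_ne_zero (hA : A ≠ 0) : ∀ n, nSum n A ≠ 0
  | 0 => Multiset.singleton_ne_zero 0
  | n + 1 => pSum_ne_zero hA (nSum_ne_zero hA n)

lemma toAddMonoidAlgebra_map_add_left (a : G) (B : Multiset G) :
    toAddMonoidAlgebra G (B.map (a + ·)) =
      AddMonoidAlgebra.single a 1 * toAddMonoidAlgebra G B := by
  induction B using Multiset.induction with
  | empty => simp
  | cons b B ih =>
    rw [Multiset.map_cons, toAddMonoidAlgebra_cons, toAddMonoidAlgebra_cons, ih, mul_add,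
      AddMonoidAlgebra.single_mul_single, one_mul]

lemma toAddMonoidAlgebra_pSum (A B : Multiset G) :
    toAddMonoidAlgebra G (pSum A B) = toAddMonoidAlgebra G A * toAddMonoidAlgebra G B := by
  induction A using Multiset.induction with
  | empty => simp [pSum_zero_left]
  | cons a A ih =>
    rw [pSum_cons_left, map_add, toAddMonoidAlgebra_map_add_left, ih, toAddMonoidAlgebra_cons,
      add_mul]

lemma toAddMonoidAlgebra_nSum (n : ℕ) (A : Multiset G) :
    toAddMonoidAlgebra G (nSum n A) = toAddMonoidAlgebra G A ^ n := by
  induction n with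
  | zero => simp [nSum, toAddMonoidAlgebra_singleton, AddMonoidAlgebra.one_def]
  | succ n ih => rw [nSum, toAddMonoidAlgebra_pSum, ih, pow_succ']

lemma nSum_pSum_singleton (n : ℕ) (A : Multiset G) (h : G) :
    nSum n (pSum A {h}) = pSum (nSum n A) {n • h} := by
  apply toAddMonoidAlgebra_injective
  simp only [toAddMonoidAlgebra_nSum, toAddMonoidAlgebra_pSum, toAddMonoidAlgebra_singleton,
    mul_pow, AddMonoidAlgebra.single_pow, one_pow]

lemma eq_of_nSum_eq_nSum [NoZeroDivisors (AddMonoidAlgebra ℚ G)] {n : ℕ} (hn : 0 < n)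
    (hA : A ≠ 0) (h : nSum n A = nSum n B) : A = B := by
  set p := toAddMonoidAlgebra G A
  set q := toAddMonoidAlgebra G B
  have hpq : p ^ n = q ^ n := by
    simpa only [toAddMonoidAlgebra_nSum] using congrArg (toAddMonoidAlgebra G) h
  have hgeom : ∑ i ∈ Finset.range n, p ^ i * q ^ (n - 1 - i) ≠ 0 := by
    simp only [p, q, ← toAddMonoidAlgebra_nSum, ← toAddMonoidAlgebra_pSum, ← map_sum]
    rw [Ne, map_eq_zero_iff _ toAddMonoidAlgebra_injective, Finset.sum_eq_zero_iff]
    push Not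
    refine ⟨n - 1, Finset.mem_range.2 (Nat.sub_lt hn one_pos),
      pSum_ne_zero (nSum_ne_zero hA _) ?_⟩
    simp [nSum]
  have hmul := geom_sum₂_mul p q n
  rw [hpq, sub_self] at hmul
  exact toAddMonoidAlgebra_injective (sub_eq_zero.1 ((mul_eq_zero.1 hmul).resolve_left hgeom))

end AddCommGroup

lemma Multiset.exists_isGreatest {α : Type*} [LinearOrder α] {s : Multiset α} (hs : s ≠ 0) :
    ∃ a, IsGreatest {x | x ∈ s} a := by
  classical
  have hne := Multiset.toFinset_nonempty.2 hs
  exact ⟨s.toFinset.max' hne, Multiset.mem_toFinset.1 (s.toFinset.max'_mem hne),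
    fun x hx => s.toFinset.le_max' x (Multiset.mem_toFinset.2 hx)⟩

section IsOrderedAddMonoid

variable {G : Type*} [AddCommGroup G] [PartialOrder G] [IsOrderedAddMonoid G]
  {A B : Multiset G} {a b : G}

lemma isGreatest_pSum (ha : IsGreatest {x | x ∈ A} a) (hb : IsGreatest {x | x ∈ B} b) :
    IsGreatest {x | x ∈ pSum A B} (a + b) := by
  refine ⟨mem_pSum.2 ⟨a, ha.1, b, hb.1, rfl⟩, ?_⟩
  rintro _ hxy
  obtain ⟨x, hx, y, hy, rfl⟩ := mem_pSum.1 hxy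
  exact add_le_add (ha.2 hx) (hb.2 hy)

lemma isGreatest_nSum (ha : IsGreatest {x | x ∈ A} a) (n : ℕ) :
    IsGreatest {x | x ∈ nSum n A} (n • a) := by
  induction n with
  | zero => simp [nSum]
  | succ n ih => simpa [nSum, succ_nsmul'] using isGreatest_pSum ha ih

end IsOrderedAddMonoid

lemma exists_linearOrder_isOrderedAddMonoid {G : Type*} [AddCommGroup G] [AddGroup.FG G]
    [IsAddTorsionFree G] : ∃ _ : LinearOrder G, IsOrderedAddMonoid G := by
  let f : G → Lex (Fin (AffineAddMonoid.dim G) →₀ ℤ) :=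
    fun x => toLex (FreeAbelianGroup.equivFinsupp _ (AffineAddMonoid.embedding G x))
  have hf : Function.Injective f :=
    toLex.injective.comp <| (FreeAbelianGroup.equivFinsupp _).injective.comp
      AffineAddMonoid.embedding_injective
  let := LinearOrder.lift' f hf
  exact ⟨_, Function.Injective.isOrderedAddMonoid f (fun x y => by simp [f]) Iff.rfl⟩

theorem multiset_div_by_n_with_translation {G : Type*} [AddCommGroup G]
    (hfg : AddGroup.FG G) (hG : ∀ g : G, g ≠ 0 → ¬IsOfFinAddOrder g)
    (n : ℕ) (hn : 0 < n)
    (A B : Multiset G) (hA : A ≠ 0) (hB : B ≠ 0) (g : G)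
    (h : pSum (nSum n A) {g} = nSum n B) :
    ∃ h' : G, g = n • h' ∧ pSum A {h'} = B := by
  have : IsAddTorsionFree G := .of_not_isOfFinAddOrder fun a ha => hG a ha
  obtain ⟨_, _⟩ := exists_linearOrder_isOrderedAddMonoid (G := G)
  obtain ⟨a, ha⟩ := Multiset.exists_isGreatest hA
  obtain ⟨b, hb⟩ := Multiset.exists_isGreatest hB
  have hab : n • a + g = n • b :=
    (isGreatest_pSum (isGreatest_nSum ha n) (by simp)).unique (h ▸ isGreatest_nSum hb n)
  have hg : g = n • (b - a) := by rw [nsmul_sub, ← hab, add_sub_cancel_left]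
  refine ⟨b - a, hg, eq_of_nSum_eq_nSum hn (pSum_ne_zero hA (Multiset.singleton_ne_zero _)) ?_⟩
  rw [nSum_pSum_singleton, ← hg, h]
end
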